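/- Let G = ⟨e₁,e₂⟩ ≅ ℤ², g ∈ {e₁, e₂, e₁e₂}, and consider commutators f = [x_g, y₁^{(k₁)}, …, y_n^{(k_n)}] and h = [x_g, y₁^{(k'₁)}, …, y_m^{(k'_m)}], where 0 ≤ k₁, …, k_n, k'₁, …, k'_m < |K|. To such a commutator f associate the sequence S_f = (k₁, …, k_n) ∈ D(ℕ₀). If S_f ⪯ S_h in the Higman order on D(ℕ₀), then h ∈ ⟨f⟩^{T_G} + Id_G(UT₃⁽⁻⁾, Γ(e₁,e₂)). -/

import Mathlib

open FreeLieAlgebra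

/-- The free `G`-graded Lie algebra over `K` on variables `x_{i,g}`, `i ∈ ℕ`, `g ∈ G`. -/
abbrev FL (K : Type*) [Field K] (G : Type*) := FreeLieAlgebra K (ℕ × G)

section Framework

variable (K : Type*) [Field K] (G : Type*) [CommGroup G]

/-- `IsHom K G g a` : `a` is homogeneous of degree `g` in the free graded Lie algebra. -/
inductive IsHom : G → FL K G → Prop
  | var (i : ℕ) (g : G) : IsHom g (of K (i, g))
  | zero (g : G) : IsHom g 0
  | add {g : G} {a b : FL K G} : IsHom g a → IsHom g b → IsHom g (a + b)
  | smul {g : G} {a : FL K G} (c : K) : IsHom g a → IsHom g (c • a)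
  | lie {g h : G} {a b : FL K G} : IsHom g a → IsHom h b → IsHom (g * h) ⁅a, b⁆

/-- A graded substitution: an endomorphism sending each variable `x_{i,g}` to a homogeneous
element of degree `g`. -/
def IsGradedSubst (φ : FL K G →ₗ⁅K⁆ FL K G) : Prop :=
  ∀ (i : ℕ) (g : G), IsHom K G g (φ (of K (i, g)))

/-- A `T_G`-ideal: a Lie ideal invariant under all graded substitutions. -/
def IsTIdeal (I : LieIdeal K (FL K G)) : Prop :=
  ∀ φ : FL K G →ₗ⁅K⁆ FL K G, IsGradedSubst K G φ → ∀ a ∈ I, φ a ∈ I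

/-- The `T_G`-ideal generated by a set `S`. -/
noncomputable def tClosure (S : Set (FL K G)) : LieIdeal K (FL K G) :=
  sInf {I : LieIdeal K (FL K G) | IsTIdeal K G I ∧ S ⊆ ↑I}

/-- The graded polynomial identities of a `G`-graded Lie algebra `(A, Γ)`, as a Lie ideal of the
free graded Lie algebra. -/
def gradedIdeal (A : Type*) [LieRing A] [LieAlgebra K A] (Γ : G → Submodule K A) :
    LieIdeal K (FL K G) where
  carrier := {f | ∀ ψ : FL K G →ₗ⁅K⁆ A, (∀ (i : ℕ) (g : G), ψ (of K (i, g)) ∈ Γ g) → ψ f = 0}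
  add_mem' := by
    intro a b ha hb ψ hψ
    rw [map_add ψ, ha ψ hψ, hb ψ hψ, add_zero]
  zero_mem' := by
    intro ψ _
    exact ψ.map_zero
  smul_mem' := by
    intro c a ha ψ hψ
    rw [map_smul ψ, ha ψ hψ, smul_zero]
  lie_mem := by
    intro x m hm ψ hψ
    rw [ψ.map_lie, hm ψ hψ, lie_zero]

/-- Left-normed iterated commutator `[x, l₁, l₂, …]`. -/
noncomputable def lnorm (x : FL K G) (l : List (FL K G)) : FL K G := l.foldl (fun a b => ⁅a, b⁆) x

/-- The list `y₁^{(p₁)}, …, y_r^{(p_r)}` of trivial-degree variables with multiplicities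
(0-indexed: the variables are `x_{0,1}, …, x_{r-1,1}`). -/
noncomputable def yRun (p : ℕ → ℕ) : ℕ → List (FL K G)
  | 0 => []
  | n + 1 => yRun p n ++ List.replicate (p n) (of K (n, (1 : G)))

attribute [local instance] LieRing.ofAssociativeRing LieAlgebra.ofAssociativeAlgebra

/-- 3×3 matrices. -/
abbrev M3 (K : Type*) [Field K] := Matrix (Fin 3) (Fin 3) K

/-- Matrix units. -/
def E3 (i j : Fin 3) : M3 K := Matrix.single i j 1

/-- The elementary grading `Γ(g,h)` on upper triangular 3×3 matrices:
`deg e₁₁ = deg e₂₂ = deg e₃₃ = 1`, `deg e₁₂ = g`, `deg e₂₃ = h`, `deg e₁₃ = gh`.  The component of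
degree `l` is the span of the matrix units of degree `l`. -/
def utGrading (g h : G) : G → Submodule K (M3 K) := fun l =>
  Submodule.span K {m : M3 K |
    (l = 1 ∧ (m = E3 K 0 0 ∨ m = E3 K 1 1 ∨ m = E3 K 2 2)) ∨
    (l = g ∧ m = E3 K 0 1) ∨ (l = h ∧ m = E3 K 1 2) ∨ (l = g * h ∧ m = E3 K 0 2)}

/-- The support of the grading `Γ(g,h)`. -/
def utSupp (g h : G) : Set G := {l | utGrading K G g h l ≠ ⊥}

/-- The graded identities `Id_G(UT₃⁽⁻⁾, Γ(g,h))`. -/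
def IdUT3 (g h : G) : LieIdeal K (FL K G) := gradedIdeal K G (M3 K) (utGrading K G g h)

/-- 2×2 matrices. -/
abbrev M2 (K : Type*) [Field K] := Matrix (Fin 2) (Fin 2) K

/-- Matrix units. -/
def E2 (i j : Fin 2) : M2 K := Matrix.single i j 1

/-- The space of upper triangular 2×2 matrices, `UT₂⁽⁻⁾`. -/
def ut2 : Submodule K (M2 K) := Submodule.span K {E2 K 0 0, E2 K 1 1, E2 K 0 1}

/-- Ordinary (ungraded) Lie polynomial identities of `UT₂⁽⁻⁾`. -/
def IdUT2 : Set (FL K G) :=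
  {f | ∀ ψ : FL K G →ₗ⁅K⁆ M2 K, (∀ (i : ℕ) (g : G), ψ (of K (i, g)) ∈ ut2 K) → ψ f = 0}

/-- The free Lie subalgebra `L(Y)` on the trivial-degree variables. -/
noncomputable def LY : LieSubalgebra K (FL K G) :=
  LieSubalgebra.lieSpan K (FL K G) {a | ∃ i : ℕ, a = of K (i, (1 : G))}

/-- Exponent bound: `0 ≤ p ℓ < |K|` when `K` is finite (no bound when `K` is infinite). -/
def expOK (r : ℕ) (p : ℕ → ℕ) : Prop := ∀ ℓ < r, Finite K → p ℓ < Nat.card K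

end Framework

/-! ## Statement 3 : Higman-order consequence for one-`x` commutators, universal grading -/

/-- The Higman order on finite sequences: `l₁ ⪯ l₂` iff `l₂` has a sublist that dominates `l₁`
pointwise. -/
def Higman {α : Type*} (le : α → α → Prop) (l₁ l₂ : List α) : Prop :=
  ∃ l : List α, l.Sublist l₂ ∧ List.Forall₂ le l₁ l

/-- The free abelian group of rank 2, `G = ⟨e₁, e₂⟩ ≅ ℤ²` (multiplicative notation). -/
abbrev Gu : Type := Multiplicative (ℤ × ℤ)

/-- The first free generator. -/
def e1 : Gu := Multiplicative.ofAdd (1, 0)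

/-- The second free generator. -/
def e2 : Gu := Multiplicative.ofAdd (0, 1)

/-! A Higman embedding `σ` of `S_f` into `S_h` gives the graded substitution
`y_i ↦ y_{σ i}`, `x_g ↦ [x_g, y₁^{(c₁)}, …, y_m^{(c_m)}]`, where `c_j` supplies the exponents
of `h` not covered by `f`. Under a graded evaluation in `UT₃`, `x_g` goes to a multiple of the
matrix unit `e_pq` of degree `g` and each `y_ℓ` to a diagonal matrix `D`, which acts on `e_pq` by
the scalar `D_qq - D_pp`. Hence `[x_g, y's]` evaluates to `e_pq` times a product depending only
on the multiset of the `y`'s, and `h` and the image of `f` have the same evaluations. -/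

attribute [local instance] LieRing.ofAssociativeRing LieAlgebra.ofAssociativeAlgebra

open Finset

section HigmanEmbedding

variable {ι κ M : Type*}

theorem exists_injective_of_higman {α : Type*} {r : α → α → Prop} {n m : ℕ} {k k' : ℕ → α}
    (hH : Higman r ((List.range n).map k) ((List.range m).map k')) :
    ∃ σ : ℕ → ℕ, σ.Injective ∧ ∀ i < n, σ i < m ∧ r (k i) (k' (σ i)) := by
  obtain ⟨l, hsub, hr⟩ := hH
  obtain ⟨σ, hσ⟩ := List.sublist_iff_exists_orderEmbedding_getElem?_eq.1 hsub
  have hlen : n = l.length := by simpa using hr.length_eq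
  refine ⟨σ, σ.injective, fun i hi => ?_⟩
  have hil : i < l.length := hlen ▸ hi
  obtain ⟨hσm, hσk⟩ :=
    List.getElem?_eq_some_iff.1 ((hσ i).symm.trans (List.getElem?_eq_getElem hil))
  simp only [List.length_map, List.length_range, List.getElem_map, List.getElem_range] at hσm hσk
  refine ⟨hσm, hσk ▸ ?_⟩
  simpa using List.forall₂_iff_get.1 hr |>.2 i (by simpa using hi) hil

theorem sum_fiber_le_of_injective [DecidableEq κ] {σ : ι → κ} (hσ : σ.Injective) (s : Finset ι)
    {k : ι → ℕ} {k' : κ → ℕ} (hle : ∀ i ∈ s, k i ≤ k' (σ i)) (j : κ) :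
    ∑ i ∈ s with σ i = j, k i ≤ k' j := by
  rcases (s.filter (σ · = j)).eq_empty_or_nonempty with hempty | ⟨i, hi⟩
  · simp [hempty]
  · rw [mem_filter] at hi
    have hsingle : s.filter (σ · = j) = {i} :=
      eq_singleton_iff_unique_mem.2 ⟨mem_filter.2 hi, fun i' hi' =>
        hσ ((mem_filter.1 hi').2.trans hi.2.symm)⟩
    rw [hsingle, sum_singleton, ← hi.2]
    exact hle i hi.1

theorem prod_pow_sub_fiber_mul_prod_comp [CommMonoid M] [DecidableEq κ] {σ : ι → κ}
    (hσ : σ.Injective) {s : Finset ι} {t : Finset κ} (hst : ∀ i ∈ s, σ i ∈ t)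
    {k : ι → ℕ} {k' : κ → ℕ} (hle : ∀ i ∈ s, k i ≤ k' (σ i)) (w : κ → M) :
    (∏ j ∈ t, w j ^ (k' j - ∑ i ∈ s with σ i = j, k i)) * ∏ i ∈ s, w (σ i) ^ k i =
      ∏ j ∈ t, w j ^ k' j := by
  have hfiber : ∏ i ∈ s, w (σ i) ^ k i = ∏ j ∈ t, w j ^ ∑ i ∈ s with σ i = j, k i := by
    rw [← prod_fiberwise_of_maps_to hst]
    refine prod_congr rfl fun j _ => ?_
    rw [← prod_pow_eq_pow_sum]
    exact prod_congr rfl fun i hi => by rw [(mem_filter.1 hi).2]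
  rw [hfiber, ← prod_mul_distrib]
  refine prod_congr rfl fun j _ => ?_
  rw [← pow_add, Nat.sub_add_cancel (sum_fiber_le_of_injective hσ s hle j)]

end HigmanEmbedding

section MatrixUnits

open Matrix

variable {R n : Type*} [CommRing R] [Fintype n] [DecidableEq n]

theorem Matrix.lie_single_diagonal (p q : n) (c : R) (d : n → R) :
    ⁅single p q c, diagonal d⁆ = (d q - d p) • single p q c := by
  ext i j
  rw [Ring.lie_def, sub_apply, mul_diagonal, diagonal_mul, smul_apply, single_apply]
  split_ifs with h
  · obtain ⟨rfl, rfl⟩ := h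
    rw [smul_eq_mul]
    ring
  · simp

theorem Matrix.IsDiag.lie_single {D : Matrix n n R} (hD : D.IsDiag) (p q : n) (c : R) :
    ⁅single p q c, D⁆ = (D q q - D p p) • single p q c := by
  conv_lhs => rw [← hD.diagonal_diag]
  rw [lie_single_diagonal, diag_apply, diag_apply]

end MatrixUnits

section UTGrading

variable {K : Type*} [Field K]

theorem isDiag_of_mem_utGrading_one {G : Type*} [CommGroup G] {g h : G} (hg : g ≠ 1)
    (hh : h ≠ 1) (hgh : g * h ≠ 1) {D : M3 K} (hD : D ∈ utGrading K G g h 1) : D.IsDiag := by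
  induction hD using Submodule.span_induction with
  | mem m hm =>
    have hdiag (i : Fin 3) : (E3 K i i).IsDiag := by
      rw [E3, ← Matrix.diagonal_single]
      exact Matrix.isDiag_diagonal _
    rcases hm with ⟨-, rfl | rfl | rfl⟩ | ⟨hc, -⟩ | ⟨hc, -⟩ | ⟨hc, -⟩
    · exact hdiag 0
    · exact hdiag 1
    · exact hdiag 2
    · exact absurd hc.symm hg
    · exact absurd hc.symm hh
    · exact absurd hc.symm hgh
  | zero => exact Matrix.isDiag_zero
  | add _ _ _ _ hA hB => exact hA.add hB
  | smul c _ _ hA => exact hA.smul c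

theorem exists_utGrading_le_span_E3 {g : Gu} (hg : g ∈ ({e1, e2, e1 * e2} : Set Gu)) :
    ∃ p q : Fin 3, utGrading K Gu e1 e2 g ≤ Submodule.span K {E3 K p q} := by
  have h1 : e1 ≠ 1 ∧ e2 ≠ 1 ∧ e1 * e2 ≠ 1 := by decide
  have h2 : e1 ≠ e2 ∧ e1 ≠ e1 * e2 ∧ e2 ≠ e1 * e2 := by decide
  rcases hg with rfl | rfl | rfl
  · exact ⟨0, 1, Submodule.span_mono fun m hm => by simpa [h1, h2] using hm⟩
  · exact ⟨1, 2, Submodule.span_mono fun m hm => by simpa [h1, h2, h2.1.symm] using hm⟩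
  · exact ⟨0, 2, Submodule.span_mono fun m hm => by
      simpa [h1, h2.2.1.symm, h2.2.2.symm] using hm⟩

end UTGrading

section LeftNormed

variable {K G A : Type*} [Field K] [LieRing A] [LieAlgebra K A]

theorem LieHom.map_lnorm (θ : FL K G →ₗ⁅K⁆ A) (x : FL K G) (l : List (FL K G)) :
    θ (lnorm K G x l) = (l.map θ).foldl (fun a b => ⁅a, b⁆) (θ x) := by
  rw [lnorm, List.foldl_map]
  exact (List.foldl_hom θ fun a b => (θ.map_lie a b).symm).symm

variable [CommGroup G]

theorem mem_yRun {P : ℕ → ℕ} {r : ℕ} {b : FL K G} (hb : b ∈ yRun K G P r) :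
    ∃ ℓ, b = of K (ℓ, 1) := by
  induction r with
  | zero => simp [yRun] at hb
  | succ r ih =>
    rcases List.mem_append.1 hb with hb | hb
    · exact ih hb
    · exact ⟨r, List.eq_of_mem_replicate hb⟩

theorem prod_map_yRun {M : Type*} [CommMonoid M] (F : FL K G → M) (P : ℕ → ℕ) (r : ℕ) :
    ((yRun K G P r).map F).prod = ∏ ℓ ∈ range r, F (of K (ℓ, 1)) ^ P ℓ := by
  induction r with
  | zero => simp [yRun]
  | succ r ih => simp [yRun, ih, prod_range_succ]

theorem isHom_lnorm {g : G} {x : FL K G} {l : List (FL K G)} (hx : IsHom K G g x)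
    (hl : ∀ b ∈ l, IsHom K G 1 b) : IsHom K G g (lnorm K G x l) := by
  induction l generalizing x with
  | nil => exact hx
  | cons b l ih =>
    exact ih (mul_one g ▸ hx.lie (hl b List.mem_cons_self))
      fun b' hb' => hl b' (List.mem_cons_of_mem b hb')

theorem isHom_lnorm_yRun {g : G} {x : FL K G} (hx : IsHom K G g x) (P : ℕ → ℕ) (r : ℕ) :
    IsHom K G g (lnorm K G x (yRun K G P r)) :=
  isHom_lnorm hx fun b hb => by
    obtain ⟨ℓ, rfl⟩ := mem_yRun hb
    exact IsHom.var ℓ 1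

theorem foldl_lie_smul_of_lie_eq_smul {e : A} {μ : A → K} {l : List A}
    (he : ∀ b ∈ l, ⁅e, b⁆ = μ b • e) (c : K) :
    l.foldl (fun a b => ⁅a, b⁆) (c • e) = (c * (l.map μ).prod) • e := by
  induction l generalizing c with
  | nil => simp
  | cons b l ih =>
    rw [List.foldl_cons, smul_lie, he b List.mem_cons_self, smul_smul,
      ih (fun b' hb' => he b' (List.mem_cons_of_mem b hb')), List.map_cons, List.prod_cons,
      mul_assoc]

theorem LieHom.map_lnorm_yRun_of_lie_eq_smul (θ : FL K G →ₗ⁅K⁆ A) {e : A} (μ : A → K)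
    (he : ∀ ℓ, ⁅e, θ (of K (ℓ, 1))⁆ = μ (θ (of K (ℓ, 1))) • e) {x : FL K G} {c : K}
    (hx : θ x = c • e) (P : ℕ → ℕ) (r : ℕ) :
    θ (lnorm K G x (yRun K G P r)) =
      (c * ∏ ℓ ∈ Finset.range r, μ (θ (of K (ℓ, 1))) ^ P ℓ) • e := by
  rw [θ.map_lnorm, hx, foldl_lie_smul_of_lie_eq_smul, List.map_map, prod_map_yRun]
  · rfl
  · intro _ hb
    obtain ⟨y, hy, rfl⟩ := List.mem_map.1 hb
    obtain ⟨ℓ, rfl⟩ := mem_yRun hy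
    exact he ℓ

end LeftNormed

section Substitution

variable {K G : Type*} [Field K] [CommGroup G]

theorem mem_tClosure_of_isGradedSubst {S : Set (FL K G)} {f : FL K G} (hf : f ∈ S)
    {φ : FL K G →ₗ⁅K⁆ FL K G} (hφ : IsGradedSubst K G φ) : φ f ∈ tClosure K G S := by
  change φ f ∈ ((tClosure K G S : LieIdeal K (FL K G)) : Set (FL K G))
  rw [tClosure, LieSubmodule.coe_sInf]
  exact Set.mem_iInter₂.2 fun I hI => hI.1 φ hφ f (hI.2 hf)

theorem exists_isGradedSubst {g : G} (hg : g ≠ 1) (σ : ℕ → ℕ) {X : FL K G}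
    (hX : IsHom K G g X) :
    ∃ φ : FL K G →ₗ⁅K⁆ FL K G, IsGradedSubst K G φ ∧
      (∀ i, φ (of K (i, 1)) = of K (σ i, 1)) ∧ φ (of K (0, g)) = X := by
  classical
  let F : ℕ × G → FL K G := fun v =>
    if v.2 = 1 then of K (σ v.1, 1) else if v = (0, g) then X else of K v
  refine ⟨lift K F, fun i d => ?_, fun i => by simp [F], by simp [F, hg]⟩
  rw [lift_of_apply]
  simp only [F]
  split_ifs with h1 h2
  · exact h1 ▸ IsHom.var _ _
  · obtain ⟨-, rfl⟩ := Prod.ext_iff.1 h2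
    exact hX
  · exact IsHom.var i d

end Substitution

section Evaluation

variable {K : Type*} [Field K]

theorem LieHom.map_lnorm_yRun_of_isDiag {G ι : Type*} [CommGroup G] [Fintype ι] [DecidableEq ι]
    (θ : FL K G →ₗ⁅K⁆ Matrix ι ι K) (hθ : ∀ ℓ, (θ (of K (ℓ, 1))).IsDiag) {x : FL K G}
    {p q : ι} {c : K} (hx : θ x = c • Matrix.single p q 1) (P : ℕ → ℕ) (r : ℕ) :
    θ (lnorm K G x (yRun K G P r)) =
      (c * ∏ ℓ ∈ Finset.range r, (θ (of K (ℓ, 1)) q q - θ (of K (ℓ, 1)) p p) ^ P ℓ) •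
        Matrix.single p q 1 :=
  θ.map_lnorm_yRun_of_lie_eq_smul (fun D => D q q - D p p) (fun ℓ => (hθ ℓ).lie_single p q 1)
    hx P r

theorem lnorm_sub_subst_mem_IdUT3 {g : Gu} (hg : g ∈ ({e1, e2, e1 * e2} : Set Gu))
    {φ : FL K Gu →ₗ⁅K⁆ FL K Gu} {σ : ℕ → ℕ} (hφy : ∀ i, φ (of K (i, 1)) = of K (σ i, 1))
    {n m : ℕ} {c k k' : ℕ → ℕ}
    (hφx : φ (of K (0, g)) = lnorm K Gu (of K (0, g)) (yRun K Gu c m))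
    (hexp : ∀ w : ℕ → K,
      (∏ j ∈ range m, w j ^ c j) * ∏ i ∈ range n, w (σ i) ^ k i =
        ∏ j ∈ range m, w j ^ k' j) :
    lnorm K Gu (of K (0, g)) (yRun K Gu k' m) - φ (lnorm K Gu (of K (0, g)) (yRun K Gu k n)) ∈
      IdUT3 K Gu e1 e2 := by
  intro ψ hψ
  obtain ⟨p, q, hpq⟩ := exists_utGrading_le_span_E3 (K := K) hg
  obtain ⟨α, hα⟩ := Submodule.mem_span_singleton.1 (hpq (hψ 0 g))
  have hdiag : ∀ ℓ, (ψ (of K (ℓ, 1))).IsDiag := fun ℓ =>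
    isDiag_of_mem_utGrading_one (by decide) (by decide) (by decide) (hψ ℓ 1)
  have hdiagφ : ∀ ℓ, ((ψ.comp φ) (of K (ℓ, 1))).IsDiag := fun ℓ => by
    rw [LieHom.comp_apply, hφy]
    exact hdiag _
  have hψx : ψ (of K (0, g)) = α • Matrix.single p q 1 := hα.symm
  have hφψx := ψ.map_lnorm_yRun_of_isDiag hdiag hψx c m
  rw [← hφx, ← LieHom.comp_apply] at hφψx
  rw [map_sub, sub_eq_zero, ψ.map_lnorm_yRun_of_isDiag hdiag hψx, ← LieHom.comp_apply,
    (ψ.comp φ).map_lnorm_yRun_of_isDiag hdiagφ hφψx]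
  simp only [LieHom.comp_apply, hφy, mul_assoc, hexp]

end Evaluation

theorem stmt3_general (K : Type*) [Field K] (g : Gu) (hg : g ∈ ({e1, e2, e1 * e2} : Set Gu))
    (n m : ℕ) (k k' : ℕ → ℕ)
    (hH : Higman (· ≤ ·) ((List.range n).map k) ((List.range m).map k')) :
    lnorm K Gu (of K (0, g)) (yRun K Gu k' m) ∈
      tClosure K Gu {lnorm K Gu (of K (0, g)) (yRun K Gu k n)} ⊔ IdUT3 K Gu e1 e2 := by
  obtain ⟨σ, hσ, hσk⟩ := exists_injective_of_higman hH
  have hg1 : g ≠ 1 := by rcases hg with rfl | rfl | rfl <;> decide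
  let c : ℕ → ℕ := fun j => k' j - ∑ i ∈ range n with σ i = j, k i
  obtain ⟨φ, hφ, hφy, hφx⟩ :=
    exists_isGradedSubst hg1 σ (isHom_lnorm_yRun (IsHom.var (K := K) 0 g) c m)
  have hexp (w : ℕ → K) :
      (∏ j ∈ range m, w j ^ c j) * ∏ i ∈ range n, w (σ i) ^ k i = ∏ j ∈ range m, w j ^ k' j :=
    prod_pow_sub_fiber_mul_prod_comp hσ (fun i hi => mem_range.2 (hσk i (mem_range.1 hi)).1)
      (fun i hi => (hσk i (mem_range.1 hi)).2) w
  rw [LieSubmodule.mem_sup]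
  exact ⟨_, mem_tClosure_of_isGradedSubst (Set.mem_singleton _) hφ, _,
    lnorm_sub_subst_mem_IdUT3 hg hφy hφx hexp, add_sub_cancel _ _⟩

/-- **Lemma.** For `f = [x_g, y₁^{(k₁)}, …, y_n^{(k_n)}]` and
`h = [x_g, y₁^{(k'₁)}, …, y_m^{(k'_m)}]` with `0 ≤ kᵢ, k'ⱼ < |K|`, if
`S_f = (k₁,…,k_n) ⪯ (k'₁,…,k'_m) = S_h` in the Higman order, then
`h ∈ ⟨f⟩^{T_G} + Id_G(UT₃⁽⁻⁾, Γ(e₁,e₂))`. -/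
theorem stmt3 (K : Type*) [Field K] (g : Gu) (hg : g ∈ ({e1, e2, e1 * e2} : Set Gu))
    (n m : ℕ) (k k' : ℕ → ℕ) (hk : expOK K n k) (hk' : expOK K m k')
    (hH : Higman (· ≤ ·) ((List.range n).map k) ((List.range m).map k')) :
    lnorm K Gu (of K (0, g)) (yRun K Gu k' m) ∈
      tClosure K Gu {lnorm K Gu (of K (0, g)) (yRun K Gu k n)} ⊔ IdUT3 K Gu e1 e2 :=
  stmt3_general K g hg n m k k' hH
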